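/- arXiv:1703.02311 — 2 statements merged into one kernel-verified Lean document; each statement's English description precedes it below -/
import Mathlib

section
/- Complex-step differentiation is exact to second order: if f : ℂ → ℂ is complex-differentiable in a neighborhood of a real point a and maps reals to reals, then Im(f(a + i·δ))/δ = f'(a) + O(δ²) as δ → 0; more precisely, if f is three times differentiable, Im(f(a + i·δ))/δ - f'(a) = -f'''(a)·δ²/6 + o(δ²). -/
open Complex Asymptotics Topology

/-- Complex-step differentiation is exact to second order: for `f` analytic
near a real point `a` and real on the reals,
`Im(f(a + iδ))/δ - f'(a) = -f'''(a)·δ²/6 + o(δ²)` as `δ → 0`. -/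
theorem stmt_6 (f : ℂ → ℂ) (a : ℝ) (hf : AnalyticAt ℂ f (a : ℂ))
    (hreal : ∀ x : ℝ, (f (x : ℂ)).im = 0) :
    (fun δ : ℝ =>
        (f ((a : ℂ) + (δ : ℂ) * Complex.I)).im / δ - (deriv f (a : ℂ)).re
          + (iteratedDeriv 3 f (a : ℂ)).re * δ ^ 2 / 6)
      =o[𝓝[≠] (0 : ℝ)] (fun δ : ℝ => δ ^ 2) := by
  -- an open set where f is analytic
  obtain ⟨U, hUmem, hU⟩ : ∃ U ∈ 𝓝 ((a : ℂ)), AnalyticOnNhd ℂ f U := by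
    obtain ⟨U, hU1, hU2⟩ := (hf.eventually_analyticAt).exists_mem
    exact ⟨U, hU1, fun z hz => hU2 z hz⟩
  obtain ⟨V, hVU, hVopen, haV⟩ := mem_nhds_iff.mp hUmem
  have hVan : AnalyticOnNhd ℂ f V := fun z hz => hU z (hVU hz)
  -- all iterated derivatives are real at real points of V
  have key : ∀ n : ℕ, ∀ x : ℝ, (x : ℂ) ∈ V → (iteratedDeriv n f x).im = 0 := by
    intro n
    induction n with
    | zero => intro x _; simpa using hreal x
    | succ n ih =>
      intro x hx
      have han : AnalyticOnNhd ℂ (iteratedDeriv n f) V := by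
        rw [iteratedDeriv_eq_iterate]; exact hVan.iterated_deriv n
      have hd : HasDerivAt (iteratedDeriv n f) (iteratedDeriv (n + 1) f x) (x : ℂ) := by
        have := ((han (x : ℂ) hx).differentiableAt).hasDerivAt
        rwa [← iteratedDeriv_succ] at this
      have hr : HasDerivAt (fun t : ℝ => iteratedDeriv n f (t : ℂ))
          (iteratedDeriv (n + 1) f x) x := hd.comp_ofReal
      have him : HasDerivAt (fun t : ℝ => (iteratedDeriv n f (t : ℂ)).im)
          ((iteratedDeriv (n + 1) f x).im) x :=
        Complex.imCLM.hasFDerivAt.comp_hasDerivAt x hr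
      have heq : (fun t : ℝ => (iteratedDeriv n f (t : ℂ)).im) =ᶠ[𝓝 x]
          (fun _ : ℝ => (0 : ℝ)) := by
        have hcont : ContinuousAt (fun t : ℝ => (t : ℂ)) x := Complex.continuous_ofReal.continuousAt
        filter_upwards [hcont.preimage_mem_nhds (hVopen.mem_nhds hx)] with t ht
        exact ih t ht
      have h0 : HasDerivAt (fun t : ℝ => (iteratedDeriv n f (t : ℂ)).im) 0 x :=
        (hasDerivAt_const x (0 : ℝ)).congr_of_eventuallyEq heq
      exact him.unique h0
  have keya : ∀ n : ℕ, (iteratedDeriv n f (a : ℂ)).im = 0 := fun n => key n a haV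
  -- power series
  obtain ⟨p, hpa⟩ := hf
  obtain ⟨r, hp⟩ := id hpa
  have hcoeff : ∀ n : ℕ, (n.factorial : ℂ) * p.coeff n = iteratedDeriv n f (a : ℂ) := by
    intro n
    have := hp.factorial_smul (1 : ℂ) n
    rw [iteratedDeriv_eq_iteratedFDeriv, ← this, nsmul_eq_mul]
    rfl
  have creal : ∀ n : ℕ, (p.coeff n).im = 0 := by
    intro n
    have h1 := congrArg Complex.im (hcoeff n)
    rw [keya n] at h1
    have h2 : (n.factorial : ℝ) * (p.coeff n).im = 0 := by
      simpa [Complex.mul_im] using h1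
    exact (mul_eq_zero.mp h2).resolve_left
      (Nat.cast_ne_zero.mpr n.factorial_ne_zero)
  have hderiv : deriv f (a : ℂ) = p.coeff 1 := by
    rw [hpa.deriv]; rfl
  have hd3 : iteratedDeriv 3 f (a : ℂ) = 6 * p.coeff 3 := by
    rw [← hcoeff 3]; norm_num [Nat.factorial]
  -- big-O estimate from Taylor expansion of order 4
  have htend : Filter.Tendsto (fun δ : ℝ => (δ : ℂ) * Complex.I) (𝓝 0) (𝓝 0) := by
    have : Filter.Tendsto (fun δ : ℝ => (δ : ℂ) * Complex.I) (𝓝 0)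
        (𝓝 ((0 : ℂ) * Complex.I)) :=
      (Complex.continuous_ofReal.mul continuous_const).tendsto 0
    simpa using this
  have hO : (fun δ : ℝ => f ((a : ℂ) + (δ : ℂ) * Complex.I)
      - p.partialSum 4 ((δ : ℂ) * Complex.I)) =O[𝓝 0] fun δ : ℝ => δ ^ 4 := by
    have := (hpa.isBigO_sub_partialSum_pow 4).comp_tendsto htend
    refine this.trans (IsBigO.of_bound 1 ?_)
    filter_upwards with δ
    simp only [Function.comp_apply]
    have h1 : ‖(δ : ℂ) * Complex.I‖ = |δ| := by simp
    rw [h1]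
    have h4 : |δ| ^ 4 = δ ^ 4 := (even_iff_two_dvd.mpr (by norm_num)).pow_abs δ
    rw [Real.norm_eq_abs, Real.norm_eq_abs, h4, one_mul]
  have hIm : (fun δ : ℝ => (f ((a : ℂ) + (δ : ℂ) * Complex.I)
      - p.partialSum 4 ((δ : ℂ) * Complex.I)).im) =O[𝓝 0] fun δ : ℝ => δ ^ 4 := by
    refine IsBigO.trans ?_ hO
    exact IsBigO.of_bound 1 (by
      filter_upwards with δ
      simpa using (Complex.abs_im_le_norm (f ((a : ℂ) + (δ : ℂ) * Complex.I)
        - p.partialSum 4 ((δ : ℂ) * Complex.I))))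
  have h2 : (fun δ : ℝ => (f ((a : ℂ) + (δ : ℂ) * Complex.I)
      - p.partialSum 4 ((δ : ℂ) * Complex.I)).im * δ⁻¹)
      =O[𝓝[≠] (0 : ℝ)] fun δ : ℝ => δ ^ 4 * δ⁻¹ :=
    (hIm.mono nhdsWithin_le_nhds).mul (isBigO_refl _ _)
  -- identify with the goal function on the punctured neighborhood
  have hbig : (fun δ : ℝ =>
        (f ((a : ℂ) + (δ : ℂ) * Complex.I)).im / δ - (deriv f (a : ℂ)).re
          + (iteratedDeriv 3 f (a : ℂ)).re * δ ^ 2 / 6)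
      =O[𝓝[≠] (0 : ℝ)] fun δ : ℝ => δ ^ 3 := by
    refine h2.congr' ?_ ?_
    · filter_upwards [self_mem_nhdsWithin] with δ (hδ : δ ≠ 0)
      have hps : (p.partialSum 4 ((δ : ℂ) * Complex.I)).im
          = δ * (p.coeff 1).re - δ ^ 3 * (p.coeff 3).re := by
        simp only [FormalMultilinearSeries.partialSum, Finset.sum_range_succ,
          Finset.sum_range_zero, FormalMultilinearSeries.apply_eq_pow_smul_coeff, smul_eq_mul]
        have e0 := creal 0
        have e1 := creal 1
        have e2 := creal 2
        have e3 := creal 3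
        simp only [Complex.add_im, Complex.mul_im, Complex.mul_re, Complex.ofReal_re,
          Complex.ofReal_im, Complex.I_re, Complex.I_im, pow_succ, pow_zero, one_mul]
        ring_nf
        simp only [e0, e1, e2, e3, Complex.zero_im]
        ring
      rw [hderiv, hd3]
      simp only [Complex.sub_im, hps]
      have h6 : ((6 : ℂ) * p.coeff 3).re = 6 * (p.coeff 3).re := by
        simp [Complex.mul_re]
      rw [h6]
      field_simp
      ring
    · filter_upwards [self_mem_nhdsWithin] with δ (hδ : δ ≠ 0)
      field_simp
  have hlit : (fun δ : ℝ => δ ^ 3) =o[𝓝[≠] (0 : ℝ)] fun δ : ℝ => δ ^ 2 :=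
    (isLittleO_pow_pow (by norm_num)).mono nhdsWithin_le_nhds
  exact hbig.trans_isLittleO hlit
end

section
/- Vibrato first-derivative formula for the mean parameter: if X = μ(θ) + σ·Z with Z standard Gaussian, σ > 0 fixed, μ differentiable, and V : ℝ → ℝ bounded measurable, then d/dθ E[V(μ(θ) + σZ)] = μ'(θ) · E[V(μ(θ) + σZ) · Z/σ]. -/
/-!
The law of `μ(θ) + σZ` is the Gaussian with mean `m = μ(θ)` and variance `σ²`, so the
expectation equals `∫ φ_{m,σ²}(x) V(x) dx`. Since `∂ₘ φ_{m,σ²}(x) = (x - m)/σ² · φ_{m,σ²}(x)`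
and, for `m` near `m₀`, this is dominated by a Gaussian in `x - m₀` times `|x - m₀| + 1`,
boundedness of `V` lets us differentiate under the integral. The chain rule handles
`θ ↦ μ(θ)`, and substituting back `x = m + σz` turns the score `(x - m)/σ²` into `z/σ`.
-/

open MeasureTheory ProbabilityTheory Real
open scoped NNReal

lemma gaussianReal_map_affine (m σ : ℝ) :
    (gaussianReal 0 1).map (fun z => m + σ * z)
      = gaussianReal m (.mk (σ ^ 2) (sq_nonneg σ)) := by
  have h := gaussianReal_map_const_add (μ := σ * 0) (v := (.mk (σ ^ 2) (sq_nonneg σ)) * 1) m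
  rw [← gaussianReal_map_const_mul σ, Measure.map_map (by fun_prop) (by fun_prop)] at h
  simpa [Function.comp_def] using h

lemma integral_gaussianReal_comp_affine {E : Type*} [NormedAddCommGroup E] [NormedSpace ℝ E]
    {σ : ℝ} (hσ : σ ≠ 0) (m : ℝ) (f : ℝ → E) :
    ∫ z, f (m + σ * z) ∂gaussianReal 0 1
      = ∫ x, gaussianPDFReal m (.mk (σ ^ 2) (sq_nonneg σ)) x • f x := by
  have hemb : MeasurableEmbedding (fun z : ℝ => m + σ * z) :=
    ((Homeomorph.mulLeft₀ σ hσ).trans (Homeomorph.addLeft m)).measurableEmbedding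
  rw [← hemb.integral_map, gaussianReal_map_affine,
    integral_gaussianReal_eq_integral_smul (by simpa [← NNReal.coe_eq_zero] using hσ)]

lemma hasDerivAt_gaussianPDFReal_mean (m : ℝ) (v : ℝ≥0) (x : ℝ) :
    HasDerivAt (fun m => gaussianPDFReal m v x) ((x - m) / v * gaussianPDFReal m v x) m := by
  have h : HasDerivAt (fun m => gaussianPDFReal m v x) _ m :=
    ((((hasDerivAt_id m).const_sub x).fun_pow 2).fun_neg.div_const (2 * (v : ℝ))).exp.const_mul
      (√(2 * π * v))⁻¹
  refine h.congr_deriv ?_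
  simp only [gaussianPDFReal, id]
  ring

lemma abs_mul_exp_neg_sq_div_le {v a b : ℝ} (hv : 0 < v) (hab : |a - b| ≤ 1) :
    |a| * exp (-a ^ 2 / (2 * v))
      ≤ exp (1 / (2 * v)) * ((|b| + 1) * exp (-(4 * v)⁻¹ * b ^ 2)) := by
  have habs : |a| ≤ |b| + 1 := by
    linarith [abs_sub_abs_le_abs_sub a b]
  have hsq : b ^ 2 / 2 - 1 ≤ a ^ 2 := by
    nlinarith [sq_nonneg (a - b), sq_nonneg (b - 2 * a), sq_abs (a - b), abs_nonneg (a - b)]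
  have hexp : exp (-a ^ 2 / (2 * v)) ≤ exp (1 / (2 * v)) * exp (-(4 * v)⁻¹ * b ^ 2) := by
    rw [← exp_add, exp_le_exp]
    calc -a ^ 2 / (2 * v) ≤ (2 - b ^ 2) / (4 * v) := by
          rw [div_le_div_iff₀ (by positivity) (by positivity)]; nlinarith
      _ = 1 / (2 * v) + -(4 * v)⁻¹ * b ^ 2 := by field_simp; ring
  calc |a| * exp (-a ^ 2 / (2 * v))
      ≤ (|b| + 1) * (exp (1 / (2 * v)) * exp (-(4 * v)⁻¹ * b ^ 2)) :=
        mul_le_mul habs hexp (exp_pos _).le (by positivity)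
    _ = _ := by ring

lemma integrable_abs_add_one_mul_exp_neg_mul_sq {b : ℝ} (hb : 0 < b) :
    Integrable fun x : ℝ => (|x| + 1) * exp (-b * x ^ 2) := by
  simp_rw [add_mul, one_mul]
  refine Integrable.add ?_ (integrable_exp_neg_mul_sq hb)
  refine (integrable_mul_exp_neg_mul_sq hb).norm.congr (ae_of_all _ fun x => ?_)
  simp [abs_of_pos (exp_pos _)]

theorem hasDerivAt_integral_gaussianPDFReal_mul {v : ℝ≥0} (hv : v ≠ 0) {V : ℝ → ℝ}
    (hV : AEStronglyMeasurable V) {C : ℝ} (hC : ∀ x, |V x| ≤ C) (m₀ : ℝ) :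
    HasDerivAt (fun m => ∫ x, gaussianPDFReal m v x * V x)
      (∫ x, (x - m₀) / v * gaussianPDFReal m₀ v x * V x) m₀ := by
  have hv₀ : (0 : ℝ) < v := NNReal.coe_pos.mpr (pos_iff_ne_zero.mpr hv)
  set c := (√(2 * π * v))⁻¹
  have hV_bdd : ∀ᵐ x, ‖V x‖ ≤ C := ae_of_all _ hC
  have h_bound : ∀ x, ∀ m ∈ Metric.ball m₀ 1,
      ‖(x - m) / v * gaussianPDFReal m v x * V x‖
        ≤ c / v * C * exp (1 / (2 * v))
            * ((|x - m₀| + 1) * exp (-(4 * v)⁻¹ * (x - m₀) ^ 2)) := by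
    intro x m hm
    have hxm : |(x - m) - (x - m₀)| ≤ 1 := by
      rw [sub_sub_sub_cancel_left, ← Real.dist_eq, dist_comm]; exact (Metric.mem_ball.mp hm).le
    calc ‖(x - m) / v * gaussianPDFReal m v x * V x‖
        = c / v * (|x - m| * exp (-(x - m) ^ 2 / (2 * v))) * |V x| := by
          rw [Real.norm_eq_abs, abs_mul, abs_mul, abs_div, abs_of_pos hv₀,
            abs_of_nonneg (gaussianPDFReal_nonneg _ _ _), gaussianPDFReal]
          ring
      _ ≤ c / v * (exp (1 / (2 * v))
            * ((|x - m₀| + 1) * exp (-(4 * v)⁻¹ * (x - m₀) ^ 2))) * C := by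
          gcongr c / v * ?_ * ?_
          exacts [abs_mul_exp_neg_sq_div_le hv₀ hxm, hC x]
      _ = _ := by ring
  refine (hasDerivAt_integral_of_dominated_loc_of_deriv_le (Metric.ball_mem_nhds m₀ one_pos)
    (.of_forall fun m => (measurable_gaussianPDFReal m v).aestronglyMeasurable.mul hV)
    ((integrable_gaussianPDFReal m₀ v).mul_bdd hV hV_bdd)
    (((measurable_id.sub_const m₀).div_const _).mul (measurable_gaussianPDFReal m₀ v)
      |>.aestronglyMeasurable.mul hV)
    (ae_of_all _ h_bound)
    (((integrable_abs_add_one_mul_exp_neg_mul_sq (by positivity)).comp_sub_right m₀).const_mul _)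
    (ae_of_all _ fun x m _ => (hasDerivAt_gaussianPDFReal_mean m v x).mul_const (V x))).2

/-- Vibrato first-derivative formula for the mean parameter: for
`X = μ(θ) + σZ` with `Z` standard Gaussian, `σ > 0`, `μ` differentiable and
`V` bounded measurable,
`d/dθ E[V(μ(θ) + σZ)] = μ'(θ) · E[V(μ(θ) + σZ) · Z/σ]`. -/
theorem stmt_12 (μ : ℝ → ℝ) (σ : ℝ) (hσ : 0 < σ) (V : ℝ → ℝ)
    (hVmeas : Measurable V) (hVbdd : ∃ C, ∀ x, |V x| ≤ C)
    (hμ : Differentiable ℝ μ) (θ : ℝ) :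
    HasDerivAt (fun θ' => ∫ z, V (μ θ' + σ * z) ∂(gaussianReal 0 1))
      (deriv μ θ * ∫ z, V (μ θ + σ * z) * z / σ ∂(gaussianReal 0 1)) θ := by
  obtain ⟨C, hC⟩ := hVbdd
  set v : ℝ≥0 := .mk (σ ^ 2) (sq_nonneg σ)
  have hv : v ≠ 0 := by simpa [v, ← NNReal.coe_eq_zero] using hσ.ne'
  have h_density : (fun θ' => ∫ z, V (μ θ' + σ * z) ∂(gaussianReal 0 1))
      = (fun m => ∫ x, gaussianPDFReal m v x * V x) ∘ μ :=
    funext fun θ' => integral_gaussianReal_comp_affine hσ.ne' (μ θ') V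
  have h_score : ∫ z, V (μ θ + σ * z) * z / σ ∂(gaussianReal 0 1)
      = ∫ x, (x - μ θ) / v * gaussianPDFReal (μ θ) v x * V x := by
    calc ∫ z, V (μ θ + σ * z) * z / σ ∂(gaussianReal 0 1)
        = ∫ z, (μ θ + σ * z - μ θ) / v * V (μ θ + σ * z) ∂(gaussianReal 0 1) := by
          congr 1 with z
          simp only [v, NNReal.coe_mk, add_sub_cancel_left]
          field_simp
      _ = ∫ x, gaussianPDFReal (μ θ) v x * ((x - μ θ) / v * V x) :=
          integral_gaussianReal_comp_affine hσ.ne' (μ θ) fun x => (x - μ θ) / v * V x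
      _ = _ := by
          congr 1 with x
          ring
  rw [h_density, h_score, mul_comm]
  exact (hasDerivAt_integral_gaussianPDFReal_mul hv hVmeas.aestronglyMeasurable hC (μ θ)).comp θ
    (hμ θ).hasDerivAt
end
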